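/- The functors between crossed modules and strict 2-groups (sending a crossed module [φ : G₂ → G₁] to the group-in-groupoids with objects G₁ and arrows G₁ ⋊ G₂, and sending a 2-group to the crossed module of arrows out of the identity object) are mutually inverse up to natural isomorphism, giving an equivalence of categories between crossed modules and strict 2-groups. -/

import Mathlib

open CategoryTheory

/-- A crossed module `[φ : G₂ → G₁]`. -/
structure CrossedModule (G₁ G₂ : Type) [Group G₁] [Group G₂] where
  φ : G₂ →* G₁
  act : G₂ → G₁ → G₂
  act_one : ∀ β : G₂, act β 1 = β
  act_mul : ∀ (β : G₂) (a b : G₁), act β (a * b) = act (act β a) b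
  mul_act : ∀ (α β : G₂) (a : G₁), act (α * β) a = act α a * act β a
  cm1 : ∀ α β : G₂, act β (φ α) = α⁻¹ * β * α
  cm2 : ∀ (β : G₂) (a : G₁), φ (act β a) = a⁻¹ * φ β * a

/-- A strict 2-group: a groupoid internal to groups. -/
structure Strict2Group (Ob Ar : Type) [Group Ob] [Group Ar] where
  s : Ar →* Ob
  t : Ar →* Ob
  e : Ob →* Ar
  s_e : ∀ g : Ob, s (e g) = g
  t_e : ∀ g : Ob, t (e g) = g
  comp : Ar → Ar → Ar
  s_comp : ∀ f g : Ar, t f = s g → s (comp f g) = s f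
  t_comp : ∀ f g : Ar, t f = s g → t (comp f g) = t g
  id_comp : ∀ f : Ar, comp (e (s f)) f = f
  comp_id : ∀ f : Ar, comp f (e (t f)) = f
  comp_assoc : ∀ f g h : Ar, t f = s g → t g = s h →
    comp (comp f g) h = comp f (comp g h)
  inv' : Ar → Ar
  s_inv : ∀ f : Ar, s (inv' f) = t f
  t_inv : ∀ f : Ar, t (inv' f) = s f
  comp_inv : ∀ f : Ar, comp f (inv' f) = e (s f)
  inv_comp : ∀ f : Ar, comp (inv' f) f = e (t f)
  comp_hom : ∀ f g f' g' : Ar, t f = s g → t f' = s g' →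
    comp (f * f') (g * g') = comp f g * comp f' g'

/-- The category of crossed modules. -/
structure CrsMod where
  G₁ : Type
  G₂ : Type
  [grp₁ : Group G₁]
  [grp₂ : Group G₂]
  M : CrossedModule G₁ G₂

attribute [instance] CrsMod.grp₁ CrsMod.grp₂

/-- Morphisms of crossed modules: pairs of group homomorphisms commuting with
the structure maps and equivariant for the actions. -/
@[ext]
structure CrsModHom (X Y : CrsMod) where
  f₁ : X.G₁ →* Y.G₁
  f₂ : X.G₂ →* Y.G₂
  commutes : ∀ α : X.G₂, Y.M.φ (f₂ α) = f₁ (X.M.φ α)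
  equivariant : ∀ (α : X.G₂) (g : X.G₁), f₂ (X.M.act α g) = Y.M.act (f₂ α) (f₁ g)

instance : Category CrsMod where
  Hom := CrsModHom
  id X := ⟨MonoidHom.id _, MonoidHom.id _, fun _ => rfl, fun _ _ => rfl⟩
  comp {X Y Z} f g :=
    ⟨g.f₁.comp f.f₁, g.f₂.comp f.f₂,
      fun α => by simp [g.commutes, f.commutes],
      fun α a => by simp [g.equivariant, f.equivariant]⟩
  id_comp f := rfl
  comp_id f := rfl
  assoc f g h := rfl

/-- The category of strict 2-groups (group objects in groupoids). -/
structure Str2Gp where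
  Ob : Type
  Ar : Type
  [grpOb : Group Ob]
  [grpAr : Group Ar]
  G : Strict2Group Ob Ar

attribute [instance] Str2Gp.grpOb Str2Gp.grpAr

/-- Morphisms of strict 2-groups: functors of the underlying groupoids which are
group homomorphisms on objects and on arrows. -/
@[ext]
structure Str2GpHom (X Y : Str2Gp) where
  onOb : X.Ob →* Y.Ob
  onAr : X.Ar →* Y.Ar
  map_s : ∀ f : X.Ar, Y.G.s (onAr f) = onOb (X.G.s f)
  map_t : ∀ f : X.Ar, Y.G.t (onAr f) = onOb (X.G.t f)
  map_e : ∀ g : X.Ob, onAr (X.G.e g) = Y.G.e (onOb g)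
  map_comp : ∀ f g : X.Ar, X.G.t f = X.G.s g →
    onAr (X.G.comp f g) = Y.G.comp (onAr f) (onAr g)

instance : Category Str2Gp where
  Hom := Str2GpHom
  id X := ⟨MonoidHom.id _, MonoidHom.id _, fun _ => rfl, fun _ => rfl, fun _ => rfl,
    fun _ _ _ => rfl⟩
  comp {X Y Z} F G :=
    ⟨G.onOb.comp F.onOb, G.onAr.comp F.onAr,
      fun f => by simp [G.map_s, F.map_s],
      fun f => by simp [G.map_t, F.map_t],
      fun g => by simp [G.map_e, F.map_e],
      fun f g h => by
        simp only [MonoidHom.comp_apply, F.map_comp f g h]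
        exact G.map_comp _ _ (by rw [F.map_t, F.map_s, h])⟩
  id_comp f := rfl
  comp_id f := rfl
  assoc f g h := rfl

/-! A crossed module `φ : G₂ → G₁` gives a strict 2-group whose arrows `a ⟶ φ β * a` are the
pairs `(β, a)` of the semidirect product `G₂ ⋊ G₁`, composed by multiplying the `G₂`-components;
the Peiffer identity `β^{φ α} = α⁻¹ β α` is what makes this composition a group homomorphism.

Conversely, in a strict 2-group the interchange law forces `f ≫ g = f * (e x)⁻¹ * g` for
`f : _ ⟶ x`, and makes arrows out of `1` commute with arrows into `1` (Eckmann–Hilton). The latter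
is the Peiffer identity for `t : ker s → Ob`, with `Ob` acting by conjugation with identities.
Every arrow factors uniquely as `f = (f * (e (s f))⁻¹) * e (s f)`, so the arrows are
`ker s ⋊ Ob` (counit), while `G₂` is the kernel of the projection `G₂ ⋊ G₁ → G₁` (unit). -/

open SemidirectProduct

namespace CrossedModule

variable {G₁ G₂ : Type} [Group G₁] [Group G₂] (M : CrossedModule G₁ G₂)

/-- The right action `β ↦ β^a` as the left action `β ↦ β^(a⁻¹)`, the convention of Mathlib's
semidirect products. -/
def leftAct : G₁ →* MulAut G₂ where
  toFun a :=
    { toFun := fun β => M.act β a⁻¹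
      invFun := fun β => M.act β a
      left_inv := fun β => by simp only [← M.act_mul, inv_mul_cancel, M.act_one]
      right_inv := fun β => by simp only [← M.act_mul, mul_inv_cancel, M.act_one]
      map_mul' := fun α β => M.mul_act α β a⁻¹ }
  map_one' := MulEquiv.ext fun β => by simp [M.act_one]
  map_mul' a b := MulEquiv.ext fun β => by simp [M.act_mul]

lemma leftAct_apply (a : G₁) (β : G₂) : M.leftAct a β = M.act β a⁻¹ := rfl

lemma φ_leftAct (a : G₁) (β : G₂) : M.φ (M.leftAct a β) = a * M.φ β * a⁻¹ := by
  rw [leftAct_apply, M.cm2, inv_inv]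

lemma leftAct_φ (α β : G₂) : M.leftAct (M.φ α) β = α * β * α⁻¹ := by
  rw [leftAct_apply, ← map_inv, M.cm1, inv_inv]

/-- `(β, a)` stands for the arrow `a ⟶ φ β * a`. -/
abbrev Arrows : Type := G₂ ⋊[M.leftAct] G₁

def target : M.Arrows →* G₁ where
  toFun p := M.φ p.left * p.right
  map_one' := by simp
  map_mul' p q := by simp [φ_leftAct, mul_assoc]

lemma target_apply (p : M.Arrows) : M.target p = M.φ p.left * p.right := rfl

def toStrict2Group : Strict2Group G₁ M.Arrows where
  s := rightHom
  t := M.target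
  e := inr
  s_e := rightHom_inr
  t_e g := by simp [target_apply]
  comp f g := ⟨g.left * f.left, f.right⟩
  s_comp _ _ _ := rfl
  t_comp f g h := by
    simp only [target_apply, rightHom_eq_right] at h ⊢
    rw [map_mul, mul_assoc, h]
  id_comp f := by ext <;> simp
  comp_id f := by ext <;> simp
  comp_assoc f g h _ _ := by ext <;> simp [mul_assoc]
  inv' f := ⟨f.left⁻¹, M.target f⟩
  s_inv _ := rfl
  t_inv f := by simp [target_apply]
  comp_inv f := by ext <;> simp
  inv_comp f := by ext <;> simp
  comp_hom f g f' g' h h' := by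
    simp only [target_apply, rightHom_eq_right] at h h'
    ext
    · simp only [mul_left, ← h, map_mul, MulAut.mul_apply, leftAct_φ]
      group
    · rfl

end CrossedModule

def CrsMod.toStr2Gp : CrsMod ⥤ Str2Gp where
  obj X := ⟨X.G₁, X.M.Arrows, X.M.toStrict2Group⟩
  map {X Y} u :=
    { onOb := u.f₁
      onAr := map u.f₂ u.f₁ fun a => MonoidHom.ext fun β => by
        simp [CrossedModule.leftAct_apply, u.equivariant]
      map_s := fun _ => rfl
      map_t := fun f => by
        simp [CrossedModule.toStrict2Group, CrossedModule.target_apply, u.commutes]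
      map_e := map_inr _ _ _
      map_comp := fun f g _ => by ext <;> simp [CrossedModule.toStrict2Group] }

namespace Strict2Group

variable {Ob Ar : Type} [Group Ob] [Group Ar] (G : Strict2Group Ob Ar)

lemma comp_one {f : Ar} (hf : G.t f = 1) : G.comp f 1 = f := by
  simpa [hf] using G.comp_id f

lemma one_comp {f : Ar} (hf : G.s f = 1) : G.comp 1 f = f := by
  simpa [hf] using G.id_comp f

/-- Interchange law for `(f * 1) ≫ (e x * ((e x)⁻¹ * g))`. -/
lemma comp_eq_mul_inv_mul {f g : Ar} (h : G.t f = G.s g) :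
    G.comp f g = f * (G.e (G.t f))⁻¹ * g := by
  have interchange := G.comp_hom f (G.e (G.t f)) 1 ((G.e (G.t f))⁻¹ * g) (G.s_e _).symm
    (by simp [G.s_e, h])
  rwa [mul_one, mul_inv_cancel_left, G.comp_id, G.one_comp (by simp [G.s_e, h]), ← mul_assoc]
    at interchange

/-- Eckmann–Hilton: interchange law for `(1 * v) ≫ (β * 1)`. -/
lemma commute_of_t_eq_one_of_s_eq_one {v β : Ar} (hv : G.t v = 1) (hβ : G.s β = 1) :
    Commute v β := by
  have interchange := G.comp_hom 1 β v 1 (by simp [hβ]) (by simp [hv])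
  rwa [one_mul, mul_one, G.one_comp hβ, G.comp_one hv, G.comp_eq_mul_inv_mul (by rw [hv, hβ]),
    hv, map_one, inv_one, mul_one] at interchange

lemma conj_e_t_eq_conj (α : Ar) {β : Ar} (hβ : G.s β = 1) :
    (G.e (G.t α))⁻¹ * β * G.e (G.t α) = α⁻¹ * β * α := by
  have hcomm : α * (G.e (G.t α))⁻¹ * β = β * (α * (G.e (G.t α))⁻¹) :=
    G.commute_of_t_eq_one_of_s_eq_one (by simp [G.t_e]) hβ
  calc (G.e (G.t α))⁻¹ * β * G.e (G.t α)
      = α⁻¹ * (α * (G.e (G.t α))⁻¹ * β) * G.e (G.t α) := by group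
    _ = α⁻¹ * (β * (α * (G.e (G.t α))⁻¹)) * G.e (G.t α) := by rw [hcomm]
    _ = α⁻¹ * β * α := by group

def toCrossedModule : CrossedModule Ob G.s.ker where
  φ := G.t.comp G.s.ker.subtype
  act β a := MulAut.conjNormal (G.e a⁻¹) β
  act_one β := by ext; simp
  act_mul β a b := by ext; simp [mul_assoc]
  mul_act α β a := map_mul _ α β
  cm1 α β := by
    ext
    simpa using G.conj_e_t_eq_conj α β.2
  cm2 β a := by simp [G.t_e, mul_assoc]

lemma coe_toCrossedModule_leftAct (a : Ob) (β : G.s.ker) :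
    (G.toCrossedModule.leftAct a β : Ar) = G.e a * β * (G.e a)⁻¹ := by
  simp [CrossedModule.leftAct_apply, toCrossedModule]

def arrowsEquiv : G.toCrossedModule.Arrows ≃* Ar where
  toFun p := p.left * G.e p.right
  invFun f := ⟨⟨f * (G.e (G.s f))⁻¹, by simp [G.s_e]⟩, G.s f⟩
  left_inv p := by
    have hs : G.s (p.left * G.e p.right) = p.right := by simp [G.s_e, G.s.mem_ker.mp p.left.2]
    ext <;> simp [hs]
  right_inv f := by simp
  map_mul' := map_mul <| lift (φ := G.toCrossedModule.leftAct) G.s.ker.subtype G.e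
    fun a => MonoidHom.ext (G.coe_toCrossedModule_leftAct a)

lemma arrowsEquiv_apply (p : G.toCrossedModule.Arrows) :
    G.arrowsEquiv p = p.left * G.e p.right := rfl

lemma arrowsEquiv_inr (a : Ob) : G.arrowsEquiv (inr a) = G.e a := one_mul _

lemma s_arrowsEquiv (p : G.toCrossedModule.Arrows) : G.s (G.arrowsEquiv p) = p.right := by
  simp [arrowsEquiv_apply, G.s_e, G.s.mem_ker.mp p.left.2]

lemma t_arrowsEquiv (p : G.toCrossedModule.Arrows) :
    G.t (G.arrowsEquiv p) = G.t p.left * p.right := by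
  simp [arrowsEquiv_apply, G.t_e]

lemma arrowsEquiv_comp {p q : G.toCrossedModule.Arrows}
    (h : G.toCrossedModule.toStrict2Group.t p = G.toCrossedModule.toStrict2Group.s q) :
    G.arrowsEquiv (G.toCrossedModule.toStrict2Group.comp p q) =
      G.comp (G.arrowsEquiv p) (G.arrowsEquiv q) := by
  obtain ⟨⟨β, hβ⟩, a⟩ := p
  obtain ⟨⟨β', hβ'⟩, a'⟩ := q
  have ha' : a' = G.t β * a := h.symm
  have hcomp : G.t (G.arrowsEquiv ⟨⟨β, hβ⟩, a⟩) = G.s (G.arrowsEquiv ⟨⟨β', hβ'⟩, a'⟩) := by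
    rw [t_arrowsEquiv, s_arrowsEquiv, ha']
  calc (β' * β * G.e a : Ar)
      = β * ((G.e (G.t β))⁻¹ * β' * G.e (G.t β)) * G.e a := by
        rw [G.conj_e_t_eq_conj β hβ']; group
    _ = β * G.e a * (G.e (G.t β * a))⁻¹ * (β' * G.e a') := by
        rw [ha', map_mul]; group
    _ = G.comp (G.arrowsEquiv ⟨⟨β, hβ⟩, a⟩) (G.arrowsEquiv ⟨⟨β', hβ'⟩, a'⟩) := by
        rw [G.comp_eq_mul_inv_mul hcomp, t_arrowsEquiv]; rfl

end Strict2Group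

def Str2Gp.toCrsMod : Str2Gp ⥤ CrsMod where
  obj Y := ⟨Y.Ob, Y.G.s.ker, Y.G.toCrossedModule⟩
  map {Y Z} v :=
    { f₁ := v.onOb
      f₂ := (v.onAr.domRestrict Y.G.s.ker).codRestrict Z.G.s.ker fun β => by
        simp [v.map_s, Y.G.s.mem_ker.mp β.2]
      commutes := fun α => v.map_t α
      equivariant := fun α g => by
        ext
        change v.onAr (Y.G.e g⁻¹ * α * (Y.G.e g⁻¹)⁻¹) = Z.G.e (v.onOb g)⁻¹ * v.onAr α * _
        simp [v.map_e] }

namespace CrossedModule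

variable {G₁ G₂ : Type} [Group G₁] [Group G₂] (M : CrossedModule G₁ G₂)

def kerSourceEquiv : G₂ ≃* M.toStrict2Group.s.ker where
  toFun α := ⟨inl α, rightHom_inl α⟩
  invFun p := p.1.left
  left_inv _ := rfl
  right_inv p := Subtype.ext (SemidirectProduct.ext rfl p.2.symm)
  map_mul' α β := Subtype.ext (map_mul inl α β)

lemma φ_kerSourceEquiv (α : G₂) :
    M.toStrict2Group.toCrossedModule.φ (M.kerSourceEquiv α) = M.φ α :=
  mul_one _

lemma kerSourceEquiv_act (α : G₂) (a : G₁) :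
    M.kerSourceEquiv (M.act α a) =
      M.toStrict2Group.toCrossedModule.act (M.kerSourceEquiv α) a := by
  apply Subtype.ext
  change inl (M.act α a) = inr a⁻¹ * inl α * (inr a⁻¹)⁻¹
  rw [← map_inv inr, ← inl_aut, leftAct_apply, inv_inv]

end CrossedModule

def CrsMod.isoMk {X Y : CrsMod} (e₁ : X.G₁ ≃* Y.G₁) (e₂ : X.G₂ ≃* Y.G₂)
    (commutes : ∀ α, Y.M.φ (e₂ α) = e₁ (X.M.φ α))
    (equivariant : ∀ α g, e₂ (X.M.act α g) = Y.M.act (e₂ α) (e₁ g)) : X ≅ Y where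
  hom := ⟨e₁.toMonoidHom, e₂.toMonoidHom, commutes, equivariant⟩
  inv :=
    { f₁ := e₁.symm.toMonoidHom
      f₂ := e₂.symm.toMonoidHom
      commutes := fun α => e₁.injective (by simp [← commutes])
      equivariant := fun α g => e₂.injective (by simp [equivariant]) }
  hom_inv_id :=
    CrsModHom.ext (MonoidHom.ext e₁.symm_apply_apply) (MonoidHom.ext e₂.symm_apply_apply)
  inv_hom_id :=
    CrsModHom.ext (MonoidHom.ext e₁.apply_symm_apply) (MonoidHom.ext e₂.apply_symm_apply)

def Str2Gp.isoMk {X Y : Str2Gp} (eOb : X.Ob ≃* Y.Ob) (eAr : X.Ar ≃* Y.Ar)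
    (map_s : ∀ f, Y.G.s (eAr f) = eOb (X.G.s f)) (map_t : ∀ f, Y.G.t (eAr f) = eOb (X.G.t f))
    (map_e : ∀ g, eAr (X.G.e g) = Y.G.e (eOb g))
    (map_comp : ∀ f g, X.G.t f = X.G.s g → eAr (X.G.comp f g) = Y.G.comp (eAr f) (eAr g)) :
    X ≅ Y where
  hom := ⟨eOb.toMonoidHom, eAr.toMonoidHom, map_s, map_t, map_e, map_comp⟩
  inv :=
    { onOb := eOb.symm.toMonoidHom
      onAr := eAr.symm.toMonoidHom
      map_s := fun f => eOb.injective (by simp [← map_s])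
      map_t := fun f => eOb.injective (by simp [← map_t])
      map_e := fun g => eAr.injective (by simp [map_e])
      map_comp := fun f g h => eAr.injective (by
        have h' : X.G.t (eAr.symm f) = X.G.s (eAr.symm g) :=
          eOb.injective (by simpa [← map_s, ← map_t] using h)
        simp [map_comp _ _ h']) }
  hom_inv_id :=
    Str2GpHom.ext (MonoidHom.ext eOb.symm_apply_apply) (MonoidHom.ext eAr.symm_apply_apply)
  inv_hom_id :=
    Str2GpHom.ext (MonoidHom.ext eOb.apply_symm_apply) (MonoidHom.ext eAr.apply_symm_apply)

def CrsMod.unitIso : 𝟭 CrsMod ≅ CrsMod.toStr2Gp ⋙ Str2Gp.toCrsMod :=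
  NatIso.ofComponents
    (fun X => CrsMod.isoMk (MulEquiv.refl _) X.M.kerSourceEquiv X.M.φ_kerSourceEquiv
      X.M.kerSourceEquiv_act)
    fun u => CrsModHom.ext rfl
      (MonoidHom.ext fun _ => Subtype.ext (SemidirectProduct.ext rfl (map_one u.f₁).symm))

def Str2Gp.counitIso : Str2Gp.toCrsMod ⋙ CrsMod.toStr2Gp ≅ 𝟭 Str2Gp :=
  NatIso.ofComponents
    (fun Y => Str2Gp.isoMk (MulEquiv.refl _) Y.G.arrowsEquiv Y.G.s_arrowsEquiv Y.G.t_arrowsEquiv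
      Y.G.arrowsEquiv_inr fun _ _ => Y.G.arrowsEquiv_comp)
    fun {X Y} v => Str2GpHom.ext rfl (MonoidHom.ext fun ⟨⟨β, _⟩, (a : X.Ob)⟩ => by
      change v.onAr β * Y.G.e (v.onOb a) = v.onAr (β * X.G.e a)
      rw [map_mul, v.map_e])

/-- the functor sending a crossed module `[φ : G₂ → G₁]` to the
group-in-groupoids with objects `G₁` and arrows `G₁ ⋊ G₂`, and the functor
sending a strict 2-group to the crossed module of arrows out of the identity
object, are mutually inverse up to natural isomorphism: the categories of
crossed modules and of strict 2-groups are equivalent. -/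
theorem crsMod_equiv_str2Gp : Nonempty (CrsMod ≌ Str2Gp) :=
  ⟨.mk CrsMod.toStr2Gp Str2Gp.toCrsMod CrsMod.unitIso Str2Gp.counitIso⟩
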